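/- arXiv:0802.1080 — 2 statements merged into one kernel-verified Lean document; each statement's English description precedes it below -/
import Mathlib

section
/- The free Laplacian H₀ on ℓ²(T) of the rooted binary tree is a bounded self-adjoint operator, and its spectrum is exactly the interval [−2√2, 2√2]. -/
open MeasureTheory Filter

noncomputable section

abbrev l2T : Type := lp (fun _ : List Bool => ℂ) 2

def eT (x : List Bool) : l2T := lp.single 2 x 1

def parentVal (f : List Bool → ℂ) (x : List Bool) : ℂ :=
  match x with
  | [] => 0
  | _ :: t => f t

def IsSchrodingerOp (V : List Bool → ℝ) (H : l2T →L[ℂ] l2T) : Prop :=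
  ∀ f : l2T, ∀ x : List Bool,
    (H f : ∀ _ : List Bool, ℂ) x =
      parentVal (fun y => f y) x + f (false :: x) + f (true :: x) + (V x : ℂ) * f x

def IsFreeLaplacian (H : l2T →L[ℂ] l2T) : Prop := IsSchrodingerOp (fun _ => 0) H

def IccC : Set ℂ := Complex.ofReal '' Set.Icc (-(2 * Real.sqrt 2)) (2 * Real.sqrt 2)

open scoped InnerProductSpace

/-!
Write `H₀ = S + S†`, where `S` is the parent shift `(S f)(x) = f(parent x)`. Every vertex has
exactly two children, so `‖S f‖² = 2‖f‖²`; hence `H₀` is self-adjoint with `‖H₀‖ ≤ 2√2`,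
and its spectrum lies in `[-2√2, 2√2]`. Conversely, every `t` in this interval can be written as
`t = 2w + w⁻¹` with `|w|² = 1/2`; then the radial function `x ↦ w ^ |x|` solves `H₀ f = t f`
away from the root. Truncated at level `n` it has norm `√(n + 1)`, while the defect
`‖(t - H₀) f‖ = √6` stays bounded, so `t - H₀` is not invertible.
-/

theorem hasSum_list_of_hasSum_cons {α M : Type*} [Fintype α] [AddCommMonoid M]
    [TopologicalSpace M] [ContinuousAdd M] {F : List α → M} {a : α → M}
    (h : ∀ b, HasSum (fun t => F (b :: t)) (a b)) :
    HasSum F (F [] + ∑ b, a b) := by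
  classical
  have hroot := hasSum_ite_eq ([] : List α) (F [])
  have hcons := hasSum_sum (s := Finset.univ) fun b _ =>
    (hasSum_extend_zero (List.cons_injective (a := b))).2 (h b)
  convert hroot.add hcons using 1
  funext x
  cases x with
  | nil => simp [Function.extend_apply']
  | cons c t =>
    rw [Finset.sum_eq_single c]
    · simp
    · intro b _ hbc
      exact Function.extend_apply' _ _ _ (by simpa using hbc)
    · simp

theorem hasSum_length_comp {α M : Type*} [Fintype α] [AddCommMonoid M] [TopologicalSpace M]
    [ContinuousAdd M] (n : ℕ) (w : ℕ → M) (hw : ∀ k, n < k → w k = 0) :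
    HasSum (fun x : List α => w x.length)
      (∑ k ∈ Finset.range (n + 1), Fintype.card α ^ k • w k) := by
  induction n generalizing w with
  | zero =>
    rw [Finset.sum_range_one, pow_zero, one_smul]
    refine hasSum_single [] fun x hx => hw _ ?_
    exact List.length_pos_iff.2 hx
  | succ n ih =>
    have hshift := ih (fun k => w (k + 1)) fun k hk => hw _ (by omega)
    convert hasSum_list_of_hasSum_cons (F := fun x : List α => w x.length) fun _ => hshift using 1
    rw [Finset.sum_range_succ']
    simp only [List.length_nil, pow_zero, one_smul, Finset.sum_const, Finset.card_univ,
      Finset.smul_sum, pow_succ', mul_smul, add_comm]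

theorem lp.hasSum_norm_sq {ι : Type*} (f : lp (fun _ : ι => ℂ) 2) :
    HasSum (fun i => ‖f i‖ ^ 2) (‖f‖ ^ 2) := by
  simpa using lp.hasSum_norm (p := 2) (by norm_num) f

theorem memℓp_two_iff_summable_sq {ι : Type*} (f : ι → ℂ) :
    Memℓp f 2 ↔ Summable fun i => ‖f i‖ ^ 2 := by
  simp [memℓp_gen_iff]

lemma hasSum_norm_parentVal_sq (f : l2T) :
    HasSum (fun x => ‖parentVal f x‖ ^ 2) (2 * ‖f‖ ^ 2) := by
  convert hasSum_list_of_hasSum_cons (F := fun x => ‖parentVal f x‖ ^ 2)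
    fun _ => lp.hasSum_norm_sq f using 1
  simp [parentVal, two_mul]

def parentShiftₗ : l2T →ₗ[ℂ] l2T where
  toFun f :=
    ⟨parentVal f, (memℓp_two_iff_summable_sq _).2 (hasSum_norm_parentVal_sq f).summable⟩
  map_add' f g := by
    ext x
    change parentVal _ x = parentVal _ x + parentVal _ x
    cases x <;> simp [parentVal]
  map_smul' c f := by ext (_ | _) <;> simp [parentVal]

lemma norm_parentShiftₗ (f : l2T) : ‖parentShiftₗ f‖ = Real.sqrt 2 * ‖f‖ := by
  have h : ‖parentShiftₗ f‖ ^ 2 = 2 * ‖f‖ ^ 2 :=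
    (lp.hasSum_norm_sq _).unique (hasSum_norm_parentVal_sq f)
  rw [← Real.sqrt_sq (norm_nonneg _), h, Real.sqrt_mul zero_le_two, Real.sqrt_sq (norm_nonneg _)]

def parentShift : l2T →L[ℂ] l2T :=
  parentShiftₗ.mkContinuous (Real.sqrt 2) fun f => (norm_parentShiftₗ f).le

lemma parentShift_apply (f : l2T) (x : List Bool) : parentShift f x = parentVal f x := rfl

lemma norm_parentShift_le : ‖parentShift‖ ≤ Real.sqrt 2 :=
  LinearMap.mkContinuous_norm_le _ (Real.sqrt_nonneg 2) _

lemma inner_eT_left (x : List Bool) (f : l2T) : ⟪eT x, f⟫_ℂ = f x := by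
  simp [eT, lp.inner_single_left]

lemma parentShift_eT (x : List Bool) : parentShift (eT x) = eT (false :: x) + eT (true :: x) := by
  ext y
  rcases y with _ | ⟨c, y⟩
  · simp [parentShift_apply, parentVal, eT, lp.single_apply]
  · cases c <;> simp [parentShift_apply, parentVal, eT, lp.single_apply, Pi.single_apply]

lemma adjoint_parentShift_apply (f : l2T) (x : List Bool) :
    (ContinuousLinearMap.adjoint parentShift f) x = f (false :: x) + f (true :: x) := by
  rw [← inner_eT_left, ContinuousLinearMap.adjoint_inner_right, parentShift_eT, inner_add_left,
    inner_eT_left, inner_eT_left]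

def freeLaplacian : l2T →L[ℂ] l2T := parentShift + ContinuousLinearMap.adjoint parentShift

lemma isFreeLaplacian_freeLaplacian : IsFreeLaplacian freeLaplacian := by
  intro f x
  simp [freeLaplacian, parentShift_apply, adjoint_parentShift_apply, add_assoc]

lemma isSelfAdjoint_freeLaplacian : IsSelfAdjoint freeLaplacian := by
  simpa [freeLaplacian, ContinuousLinearMap.star_eq_adjoint] using
    IsSelfAdjoint.add_star_self parentShift

lemma norm_freeLaplacian_le : ‖freeLaplacian‖ ≤ 2 * Real.sqrt 2 := by
  calc ‖freeLaplacian‖ ≤ ‖parentShift‖ + ‖ContinuousLinearMap.adjoint parentShift‖ :=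
        norm_add_le _ _
    _ ≤ 2 * Real.sqrt 2 := by rw [LinearIsometryEquiv.norm_map]; linarith [norm_parentShift_le]

theorem mem_spectrum_of_tendsto_norm {𝕜 E : Type*} [NontriviallyNormedField 𝕜]
    [NormedAddCommGroup E] [NormedSpace 𝕜 E] {T : E →L[𝕜] E} {a : 𝕜} {f : ℕ → E} {C : ℝ}
    (hres : ∀ n, ‖(algebraMap 𝕜 (E →L[𝕜] E) a - T) (f n)‖ ≤ C)
    (hf : Tendsto (fun n => ‖f n‖) atTop atTop) : a ∈ spectrum 𝕜 T := by
  rintro ⟨u, hu⟩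
  set B : E →L[𝕜] E := ↑u⁻¹
  obtain ⟨n, hn⟩ := (hf.eventually_gt_atTop (‖B‖ * C)).exists
  have hinv : B ((algebraMap 𝕜 (E →L[𝕜] E) a - T) (f n)) = f n := by
    rw [← hu, ← mul_apply_eq_comp, Units.inv_mul, one_apply_eq_self]
  refine hn.not_ge ?_
  calc ‖f n‖ = ‖B ((algebraMap 𝕜 (E →L[𝕜] E) a - T) (f n))‖ := by rw [hinv]
    _ ≤ ‖B‖ * ‖(algebraMap 𝕜 (E →L[𝕜] E) a - T) (f n)‖ := B.le_opNorm _
    _ ≤ ‖B‖ * C := mul_le_mul_of_nonneg_left (hres n) (norm_nonneg B)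

theorem IsSelfAdjoint.spectrum_subset_Icc_norm {A : Type*} [CStarAlgebra A] {a : A}
    (ha : IsSelfAdjoint a) : spectrum ℂ a ⊆ Complex.ofReal '' Set.Icc (-‖a‖) ‖a‖ := by
  rcases subsingleton_or_nontrivial A with hA | hA
  · simp [spectrum.of_subsingleton]
  · intro z hz
    have hre : |z.re| ≤ ‖a‖ :=
      (Complex.abs_re_le_norm z).trans (spectrum.norm_le_norm_of_mem hz)
    exact ⟨z.re, abs_le.1 hre, (ha.mem_spectrum_eq_re hz).symm⟩

lemma hasSum_norm_truncatedRadial_sq (φ : ℕ → ℂ) (n : ℕ) :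
    HasSum (fun x : List Bool => ‖if x.length ≤ n then φ x.length else 0‖ ^ 2)
      (∑ k ∈ Finset.range (n + 1), 2 ^ k * ‖φ k‖ ^ 2) := by
  convert hasSum_length_comp n (fun k => ‖if k ≤ n then φ k else 0‖ ^ 2)
    (fun k hk => by simp [not_le.2 hk]) using 1
  refine Finset.sum_congr rfl fun k hk => ?_
  rw [if_pos (Nat.lt_succ_iff.1 (Finset.mem_range.1 hk)), nsmul_eq_mul, Nat.cast_pow,
    Fintype.card_bool, Nat.cast_ofNat]

def radial (φ : ℕ → ℂ) (n : ℕ) : l2T :=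
  ⟨_, (memℓp_two_iff_summable_sq _).2 (hasSum_norm_truncatedRadial_sq φ n).summable⟩

lemma radial_apply (φ : ℕ → ℂ) (n : ℕ) (x : List Bool) :
    radial φ n x = if x.length ≤ n then φ x.length else 0 := rfl

lemma norm_radial_sq (φ : ℕ → ℂ) (n : ℕ) :
    ‖radial φ n‖ ^ 2 = ∑ k ∈ Finset.range (n + 1), 2 ^ k * ‖φ k‖ ^ 2 :=
  (lp.hasSum_norm_sq _).unique (hasSum_norm_truncatedRadial_sq φ n)

lemma two_pow_mul_norm_pow_sq {w : ℂ} (hw : ‖w‖ ^ 2 = 2⁻¹) (k : ℕ) :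
    2 ^ k * ‖w ^ k‖ ^ 2 = 1 := by
  rw [norm_pow, ← pow_mul, mul_comm k 2, pow_mul, hw, ← mul_pow]
  norm_num

lemma norm_radial_pow_sq {w : ℂ} (hw : ‖w‖ ^ 2 = 2⁻¹) (n : ℕ) :
    ‖radial (w ^ ·) n‖ ^ 2 = n + 1 := by
  simp only [norm_radial_sq, two_pow_mul_norm_pow_sq hw, Finset.sum_const, Finset.card_range]
  simp

lemma IsFreeLaplacian.algebraMap_sub_apply {H : l2T →L[ℂ] l2T} (hH : IsFreeLaplacian H)
    (t : ℂ) (f : l2T) (x : List Bool) :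
    (algebraMap ℂ (l2T →L[ℂ] l2T) t - H) f x =
      t * f x - (parentVal f x + f (false :: x) + f (true :: x)) := by
  have h := hH f x
  simp only [Complex.ofReal_zero, zero_mul, add_zero] at h
  rw [Algebra.algebraMap_eq_smul_one, sub_apply, lp.coeFn_sub, Pi.sub_apply, h]
  simp

def weylDefect (w : ℂ) (n : ℕ) (k : ℕ) : ℂ :=
  if k = 0 then w⁻¹ else if k = n then 2 * w ^ (n + 1) else if k = n + 1 then -w ^ n else 0

lemma IsFreeLaplacian.algebraMap_sub_radial_pow {H : l2T →L[ℂ] l2T} (hH : IsFreeLaplacian H)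
    {t : ℝ} {w : ℂ} (hw : 2 * w ^ 2 + 1 = t * w) {n : ℕ} (hn : 1 ≤ n) :
    (algebraMap ℂ (l2T →L[ℂ] l2T) t - H) (radial (w ^ ·) n) =
      radial (weylDefect w n) (n + 1) := by
  have hw0 : w ≠ 0 := by rintro rfl; norm_num at hw
  ext x
  rw [hH.algebraMap_sub_apply]
  rcases x with _ | ⟨c, y⟩
  · simp [radial_apply, parentVal, weylDefect, hn]
    field_simp
    linear_combination -hw
  · simp only [radial_apply, parentVal, List.length_cons]
    generalize y.length = m
    obtain h | rfl | rfl | h : m + 1 < n ∨ m + 1 = n ∨ m = n ∨ n < m := by omega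
    · simp [weylDefect, h.le, Nat.succ_le_of_lt h, h.ne, show m ≤ n by omega,
        show m ≠ n by omega]
      linear_combination (-(w ^ m)) * hw
    · simp [weylDefect]
      linear_combination (-(w ^ m)) * hw
    · simp [weylDefect]
    · simp [show ¬m ≤ n by omega, show ¬m + 1 ≤ n by omega, show ¬m + 1 + 1 ≤ n by omega]

lemma sum_weylDefect_sq {w : ℂ} (hw : ‖w‖ ^ 2 = 2⁻¹) {n : ℕ} (hn : 1 ≤ n) :
    ∑ k ∈ Finset.range (n + 2), 2 ^ k * ‖weylDefect w n k‖ ^ 2 = 6 := by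
  obtain ⟨n, rfl⟩ := Nat.exists_eq_add_of_le' hn
  have hmid : ∑ k ∈ Finset.range n, 2 ^ (k + 1) * ‖weylDefect w (n + 1) (k + 1)‖ ^ 2 = 0 :=
    Finset.sum_eq_zero fun k hk => by
      have := Finset.mem_range.1 hk
      simp [weylDefect, show k ≠ n by omega, show k ≠ n + 1 by omega]
  rw [Finset.sum_range_succ, Finset.sum_range_succ, Finset.sum_range_succ', hmid]
  have h1 := two_pow_mul_norm_pow_sq hw (n + 1)
  have h2 := two_pow_mul_norm_pow_sq hw (n + 2)
  rw [norm_pow] at h1 h2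
  simp [weylDefect, norm_inv, hw, mul_pow]
  linear_combination 2 * h1 + 2 * h2

lemma exists_norm_sq_eq_half_and_two_mul_sq_add_one_eq {t : ℝ}
    (ht : t ∈ Set.Icc (-(2 * Real.sqrt 2)) (2 * Real.sqrt 2)) :
    ∃ w : ℂ, ‖w‖ ^ 2 = 2⁻¹ ∧ 2 * w ^ 2 + 1 = t * w := by
  have ht2 : t ^ 2 ≤ 8 := by
    have h := sq_le_sq' ht.1 ht.2
    rw [mul_pow, Real.sq_sqrt zero_le_two] at h
    linarith
  obtain ⟨s, hs⟩ : ∃ s : ℝ, s ^ 2 = 8 - t ^ 2 := ⟨_, Real.sq_sqrt (by linarith)⟩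
  refine ⟨(t + s * Complex.I) / 4, ?_, ?_⟩
  · rw [norm_div, div_pow, Complex.sq_norm, Complex.normSq_add_mul_I, Complex.norm_ofNat]
    linear_combination hs / 16
  · have hs' : (s : ℂ) ^ 2 = 8 - t ^ 2 := by exact_mod_cast hs
    linear_combination (s ^ 2 / 8 : ℂ) * Complex.I_sq - hs' / 8

lemma IsFreeLaplacian.ofReal_mem_spectrum {H : l2T →L[ℂ] l2T} (hH : IsFreeLaplacian H) {t : ℝ}
    (ht : t ∈ Set.Icc (-(2 * Real.sqrt 2)) (2 * Real.sqrt 2)) : (t : ℂ) ∈ spectrum ℂ H := by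
  obtain ⟨w, hw_norm, hw⟩ := exists_norm_sq_eq_half_and_two_mul_sq_add_one_eq ht
  have hres (n : ℕ) :
      ‖(algebraMap ℂ (l2T →L[ℂ] l2T) t - H) (radial (w ^ ·) (n + 1))‖ = Real.sqrt 6 := by
    rw [hH.algebraMap_sub_radial_pow hw (by omega), ← Real.sqrt_sq (norm_nonneg _),
      norm_radial_sq, sum_weylDefect_sq hw_norm (by omega)]
  have hnorm (n : ℕ) : ‖radial (w ^ ·) (n + 1)‖ = Real.sqrt (n + 2) := by
    rw [← Real.sqrt_sq (norm_nonneg _), norm_radial_pow_sq hw_norm]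
    push_cast
    ring_nf
  refine mem_spectrum_of_tendsto_norm (fun n => (hres n).le) ?_
  simp_rw [hnorm]
  exact Real.tendsto_sqrt_atTop.comp <|
    tendsto_atTop_add_const_right _ 2 tendsto_natCast_atTop_atTop

theorem stmt0 :
    ∃ H : l2T →L[ℂ] l2T, IsFreeLaplacian H ∧ IsSelfAdjoint H ∧ spectrum ℂ H = IccC := by
  refine ⟨freeLaplacian, isFreeLaplacian_freeLaplacian, isSelfAdjoint_freeLaplacian, ?_⟩
  refine (isSelfAdjoint_freeLaplacian.spectrum_subset_Icc_norm.trans ?_).antisymm ?_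
  · exact Set.image_mono <|
      Set.Icc_subset_Icc (neg_le_neg norm_freeLaplacian_le) norm_freeLaplacian_le
  · rintro _ ⟨t, ht, rfl⟩
    exact isFreeLaplacian_freeLaplacian.ofReal_mem_spectrum ht
end
end

section
/- Let V be a bounded radially symmetric real potential on V(T), i.e. V(x) = v_{|x|} for a bounded real sequence (v_n)_{n≥0}. Let W : ℓ²(ℕ₀) → ℓ²(T) be the isometry with W e_n = 2^{−n/2} Σ_{x:|x|=n} e_x, and let J be the Jacobi operator on ℓ²(ℕ₀) with diagonal entries v_n/√2 and off-diagonal entries 1 (i.e. (Jf)(n) = f(n−1) + (v_n/√2) f(n) + f(n+1), with the convention f(−1) = 0). Then J = (1/√2) W* H_V W, and moreover H_V maps the range of W into itself, so that √2·J is unitarily equivalent to the restriction of H_V to the closed subspace ran W of ℓ²(T). -/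
/-!
`W f` is the radial function `y ↦ 2^{-|y|/2} f(|y|)`. A vertex at level `k` has its parent at
level `k - 1` (none if `k = 0`) and two children at level `k + 1`, so on radial functions `H_V`
acts as `√2 J`: `H_V W = √2 W J`, and in particular `H_V` preserves `ran W`. Since
`W* e_x = 2^{-|x|/2} e_{|x|}` and the sphere of radius `n` has `2^n` points, `W* W = 1`,
whence `J = W* H_V W / √2`.
-/

open MeasureTheory Filter ContinuousLinearMap

noncomputable section

abbrev l2N : Type := lp (fun _ : ℕ => ℂ) 2

def eN (n : ℕ) : l2N := lp.single 2 n 1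

/-- The sphere `{x : |x| = n}` of the binary tree, as a `Finset`. -/
def sphereF (n : ℕ) : Finset (List Bool) :=
  Finset.image (fun f : Fin n → Bool => List.ofFn f) Finset.univ

lemma eN_apply (n m : ℕ) : (eN n : ∀ _ : ℕ, ℂ) m = if m = n then 1 else 0 := by
  rw [eN, lp.single_apply, Pi.single_apply]

lemma eT_apply (x y : List Bool) : (eT x : ∀ _ : List Bool, ℂ) y = if y = x then 1 else 0 := by
  rw [eT, lp.single_apply, Pi.single_apply]

lemma mem_sphereF {x : List Bool} {n : ℕ} : x ∈ sphereF n ↔ x.length = n := by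
  simp only [sphereF, Finset.mem_image, Finset.mem_univ, true_and]
  constructor
  · rintro ⟨f, rfl⟩
    exact List.length_ofFn
  · rintro rfl
    exact ⟨x.get, List.ofFn_get x⟩

lemma card_sphereF (n : ℕ) : (sphereF n).card = 2 ^ n := by
  simp [sphereF, Finset.card_image_of_injective _ List.ofFn_injective]

lemma sum_sphereF_eT_apply (n : ℕ) (y : List Bool) :
    ((∑ x ∈ sphereF n, eT x : l2T) : ∀ _ : List Bool, ℂ) y = if y.length = n then 1 else 0 := by
  simp only [lp.coeFn_sum, Finset.sum_apply, eT_apply, Finset.sum_ite_eq, mem_sphereF]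

lemma clm_ext_eN {F : Type*} [NormedAddCommGroup F] [NormedSpace ℂ F] {T S : l2N →L[ℂ] F}
    (h : ∀ n, T (eN n) = S (eN n)) : T = S :=
  lp.ext_continuousLinearMap ENNReal.ofNat_ne_top fun n => ext_ring (h n)

lemma sqrt_two_mul_self : (Real.sqrt 2 : ℂ) * Real.sqrt 2 = 2 := by
  rw [← Complex.ofReal_mul, Real.mul_self_sqrt zero_le_two, Complex.ofReal_ofNat]

lemma sqrt_two_ne_zero : (Real.sqrt 2 : ℂ) ≠ 0 :=
  Complex.ofReal_ne_zero.mpr (Real.sqrt_ne_zero'.mpr zero_lt_two)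

def IsRadialLift (W : l2N →L[ℂ] l2T) : Prop :=
  ∀ n : ℕ, W (eN n) = ((Real.sqrt 2 : ℂ))⁻¹ ^ n • ∑ x ∈ sphereF n, eT x

namespace IsRadialLift

variable {W : l2N →L[ℂ] l2T}

lemma apply (hW : IsRadialLift W) (f : l2N) (y : List Bool) :
    (W f : ∀ _ : List Bool, ℂ) y = ((Real.sqrt 2 : ℂ))⁻¹ ^ y.length * f y.length := by
  suffices lp.evalCLM ℂ _ 2 y ∘L W = ((Real.sqrt 2 : ℂ))⁻¹ ^ y.length • lp.evalCLM ℂ _ 2 y.length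
    from DFunLike.congr_fun this f
  refine clm_ext_eN fun n => ?_
  change (W (eN n) : ∀ _ : List Bool, ℂ) y = ((Real.sqrt 2 : ℂ))⁻¹ ^ y.length * eN n y.length
  rw [hW, lp.coeFn_smul, Pi.smul_apply, sum_sphereF_eT_apply, eN_apply, smul_eq_mul]
  split_ifs with h <;> simp [h]

lemma adjoint_eT (hW : IsRadialLift W) (x : List Bool) :
    adjoint W (eT x) = ((Real.sqrt 2 : ℂ))⁻¹ ^ x.length • eN x.length := by
  refine ext_inner_right ℂ fun f => ?_
  rw [adjoint_inner_left, inner_smul_left, eT, eN, lp.inner_single_left, lp.inner_single_left,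
    hW.apply]
  simp

lemma adjoint_comp_self (hW : IsRadialLift W) : adjoint W ∘L W = ContinuousLinearMap.id ℂ l2N := by
  refine clm_ext_eN fun n => ?_
  have hcard : ((Real.sqrt 2 : ℂ))⁻¹ ^ n * (2 ^ n : ℕ) * ((Real.sqrt 2 : ℂ))⁻¹ ^ n = 1 := by
    rw [mul_right_comm, ← mul_pow, ← mul_inv, sqrt_two_mul_self, Nat.cast_pow, Nat.cast_ofNat,
      ← mul_pow, inv_mul_cancel₀ two_ne_zero, one_pow]
  rw [comp_apply, id_apply, hW, map_smul, map_sum,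
    Finset.sum_congr rfl fun x hx => by rw [hW.adjoint_eT, mem_sphereF.mp hx],
    Finset.sum_const, card_sphereF, ← Nat.cast_smul_eq_nsmul ℂ, smul_smul, smul_smul, hcard,
    one_smul]

end IsRadialLift

lemma IsSchrodingerOp.apply_radialLift {v : ℕ → ℝ} {HV : l2T →L[ℂ] l2T}
    (hHV : IsSchrodingerOp (fun x => v x.length) HV) {W : l2N →L[ℂ] l2T} (hW : IsRadialLift W)
    {J : l2N →L[ℂ] l2N}
    (hJ : ∀ f : l2N, ∀ n : ℕ,
      (J f : ∀ _ : ℕ, ℂ) n =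
        (if n = 0 then 0 else f (n - 1)) + ((v n / Real.sqrt 2 : ℝ) : ℂ) * f n + f (n + 1))
    (f : l2N) : HV (W f) = (Real.sqrt 2 : ℂ) • W (J f) := by
  ext x
  rw [hHV, lp.coeFn_smul, Pi.smul_apply, smul_eq_mul]
  simp only [hW.apply, hJ]
  cases x with
  | nil =>
    simp only [parentVal, List.length_nil, List.length_cons, if_pos, pow_zero]
    push_cast
    field_simp
    linear_combination -f 1 * sqrt_two_mul_self
  | cons b t =>
    simp only [parentVal, List.length_cons, Nat.add_one_ne_zero, if_false, Nat.add_sub_cancel,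
      pow_succ]
    push_cast
    field_simp
    linear_combination -f (t.length + 2) * sqrt_two_mul_self

theorem stmt17_general (v : ℕ → ℝ)
    (HV : l2T →L[ℂ] l2T) (hHV : IsSchrodingerOp (fun x => v x.length) HV)
    (W : l2N →L[ℂ] l2T)
    (hW : ∀ n : ℕ, W (eN n) = ((Real.sqrt 2 : ℂ))⁻¹ ^ n • ∑ x ∈ sphereF n, eT x)
    (J : l2N →L[ℂ] l2N)
    (hJ : ∀ f : l2N, ∀ n : ℕ,
      (J f : ∀ _ : ℕ, ℂ) n =
        (if n = 0 then 0 else f (n - 1)) + ((v n / Real.sqrt 2 : ℝ) : ℂ) * f n + f (n + 1)) :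
    J = ((Real.sqrt 2 : ℂ))⁻¹ • (adjoint W ∘L HV ∘L W) ∧
    (∀ f : l2N, ∃ g : l2N, HV (W f) = W g) ∧
    ∀ f : l2N, HV (W f) = (Real.sqrt 2 : ℂ) • W (J f) := by
  have hHW := hHV.apply_radialLift hW hJ
  refine ⟨?_, fun f => ⟨(Real.sqrt 2 : ℂ) • J f, by rw [hHW, map_smul]⟩, hHW⟩
  ext1 f
  have hWW := DFunLike.congr_fun (IsRadialLift.adjoint_comp_self hW) (J f)
  rw [comp_apply, id_apply] at hWW
  rw [smul_apply, comp_apply, comp_apply, hHW, map_smul, hWW, smul_smul,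
    inv_mul_cancel₀ sqrt_two_ne_zero, one_smul]

theorem stmt17 (v : ℕ → ℝ) (M : ℝ) (hv : ∀ n, |v n| ≤ M)
    (HV : l2T →L[ℂ] l2T) (hHV : IsSchrodingerOp (fun x => v x.length) HV)
    (W : l2N →L[ℂ] l2T)
    (hW : ∀ n : ℕ, W (eN n) = ((Real.sqrt 2 : ℂ))⁻¹ ^ n • ∑ x ∈ sphereF n, eT x)
    (J : l2N →L[ℂ] l2N)
    (hJ : ∀ f : l2N, ∀ n : ℕ,
      (J f : ∀ _ : ℕ, ℂ) n =
        (if n = 0 then 0 else f (n - 1)) + ((v n / Real.sqrt 2 : ℝ) : ℂ) * f n + f (n + 1)) :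
    J = ((Real.sqrt 2 : ℂ))⁻¹ • (adjoint W ∘L HV ∘L W) ∧
    (∀ f : l2N, ∃ g : l2N, HV (W f) = W g) ∧
    ∀ f : l2N, HV (W f) = (Real.sqrt 2 : ℂ) • W (J f) :=
  stmt17_general v HV hHV W hW J hJ
end
end
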